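/- There is an absolute constant A ≥ 1 such that the following holds. Let δ ∈ 2^{-ℕ}, let p₀ ∈ 𝒟_δ([0,1)²), and let 𝒯 ⊂ 𝒯^δ be a collection of dyadic δ-tubes, all of which intersect p₀. If the slope set σ(𝒯) is a (δ,s,C)-set for some s ≥ 0 and C > 0, then 𝒯 is a (δ,s,10C)-set. Conversely, if 𝒯 is a (δ,s,C)-set, then σ(𝒯) is a (δ,s,A·C)-set. -/

import Mathlib

open Set

noncomputable section

/-- The half-open dyadic square of side length `δ` in the plane, indexed by `z ∈ ℤ × ℤ`. -/
def dySq (δ : ℝ) (z : ℤ × ℤ) : Set (ℝ × ℝ) :=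
  Ico ((z.1 : ℝ) * δ) (((z.1 : ℝ) + 1) * δ) ×ˢ Ico ((z.2 : ℝ) * δ) (((z.2 : ℝ) + 1) * δ)

/-- `|A|_δ` : the number of dyadic `δ`-squares intersecting `A`. -/
def covN (δ : ℝ) (A : Set (ℝ × ℝ)) : ℕ :=
  {z : ℤ × ℤ | (dySq δ z ∩ A).Nonempty}.ncard

/-- `δ ∈ 2^{-ℕ}`. -/
def IsDyadicScale (δ : ℝ) : Prop := ∃ n : ℕ, δ = (1 / 2 : ℝ) ^ n

/-- `P ⊆ ℝ²` is a `(δ, s, C)`-set. -/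
def IsDeltaSet (δ s C : ℝ) (P : Set (ℝ × ℝ)) : Prop :=
  Bornology.IsBounded P ∧ P.Nonempty ∧
    ∀ r : ℝ, IsDyadicScale r → δ ≤ r → r ≤ 1 →
      ∀ z : ℤ × ℤ, (covN δ (P ∩ dySq r z) : ℝ) ≤ C * (covN δ P : ℝ) * r ^ s

/-- A family of dyadic `δ`-squares (given by their indices) is a `(δ, s, C)`-set
if its union is one. -/
def IsDeltaFam (δ s C : ℝ) (Ps : Set (ℤ × ℤ)) : Prop :=
  IsDeltaSet δ s C (⋃ z ∈ Ps, dySq δ z)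

/-- The non-vertical line `y = a x + b`, for `w = (a, b)`. -/
def lineD (w : ℝ × ℝ) : Set (ℝ × ℝ) := {xy : ℝ × ℝ | xy.2 = w.1 * xy.1 + w.2}

/-- The dyadic `δ`-tube `𝐃(p)` corresponding to the dyadic square indexed by `z`. -/
def dyTube (δ : ℝ) (z : ℤ × ℤ) : Set (ℝ × ℝ) := ⋃ w ∈ dySq δ z, lineD w

/-- Indices of dyadic `δ`-squares contained in `[-1,1) × ℝ`, i.e. parameters of tubes of `𝒯^δ`. -/
def tubeIdx (δ : ℝ) : Set (ℤ × ℤ) :=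
  {z : ℤ × ℤ | -1 ≤ (z.1 : ℝ) * δ ∧ ((z.1 : ℝ) + 1) * δ ≤ 1}

/-- The unit square `[0,1)²`. -/
def unitSq : Set (ℝ × ℝ) := Ico (0 : ℝ) 1 ×ˢ Ico (0 : ℝ) 1

/-- Indices of dyadic `δ`-squares meeting `[0,1)²`, i.e. `𝒟_δ = 𝒟_δ([0,1)²)`. -/
def sqIdx (δ : ℝ) : Set (ℤ × ℤ) := {z : ℤ × ℤ | (dySq δ z ∩ unitSq).Nonempty}

/-- The half-open dyadic interval of length `δ` indexed by `k ∈ ℤ`. -/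
def dyIv (δ : ℝ) (k : ℤ) : Set ℝ := Ico ((k : ℝ) * δ) (((k : ℝ) + 1) * δ)

/-- the number of dyadic `δ`-intervals intersecting `A ⊆ ℝ`. -/
def covN1 (δ : ℝ) (A : Set ℝ) : ℕ := {k : ℤ | (dyIv δ k ∩ A).Nonempty}.ncard

/-- `P ⊆ ℝ` is a `(δ, s, C)`-set. -/
def IsDeltaSet1 (δ s C : ℝ) (P : Set ℝ) : Prop :=
  Bornology.IsBounded P ∧ P.Nonempty ∧
    ∀ r : ℝ, IsDyadicScale r → δ ≤ r → r ≤ 1 →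
      ∀ k : ℤ, (covN1 δ (P ∩ dyIv r k) : ℝ) ≤ C * (covN1 δ P : ℝ) * r ^ s

namespace TS

variable {δ r : ℝ}

lemma dyIv_unique (hδ : 0 < δ) {x : ℝ} {k k' : ℤ} (h : x ∈ dyIv δ k) (h' : x ∈ dyIv δ k') :
    k = k' := by
  obtain ⟨h1, h2⟩ := h; obtain ⟨h1', h2'⟩ := h'
  have a : (k:ℝ) < (k':ℝ) + 1 := lt_of_mul_lt_mul_right (h1.trans_lt h2') hδ.le
  have b : (k':ℝ) < (k:ℝ) + 1 := lt_of_mul_lt_mul_right (h1'.trans_lt h2) hδ.le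
  have a' : k < k' + 1 := by exact_mod_cast a
  have b' : k' < k + 1 := by exact_mod_cast b
  omega

lemma left_mem_dyIv (hδ : 0 < δ) (k : ℤ) : (k:ℝ)*δ ∈ dyIv δ k :=
  ⟨le_refl _, by nlinarith⟩

lemma dySq_unique (hδ : 0 < δ) {x : ℝ×ℝ} {z w : ℤ×ℤ} (h : x ∈ dySq δ z) (h' : x ∈ dySq δ w) :
    z = w :=
  Prod.ext (dyIv_unique hδ h.1 h'.1) (dyIv_unique hδ h.2 h'.2)

lemma corner_mem_dySq (hδ : 0 < δ) (w : ℤ × ℤ) : ((w.1:ℝ)*δ, (w.2:ℝ)*δ) ∈ dySq δ w :=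
  ⟨left_mem_dyIv hδ w.1, left_mem_dyIv hδ w.2⟩

lemma dySq_mem {x : ℝ × ℝ} {z : ℤ × ℤ} : x ∈ dySq δ z ↔ x.1 ∈ dyIv δ z.1 ∧ x.2 ∈ dyIv δ z.2 :=
  Iff.rfl

lemma dyIv_scale (hδ : 0 < δ) {M : ℕ} (_hM : 0 < M) {x : ℝ} {j k : ℤ}
    (hx : x ∈ dyIv δ j) :
    x ∈ dyIv (δ * M) k ↔ (M:ℤ) * k ≤ j ∧ j < (M:ℤ) * (k + 1) := by
  obtain ⟨h1, h2⟩ := hx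
  have e1 : (k:ℝ) * (δ * (M:ℝ)) = (((M:ℤ) * k : ℤ):ℝ) * δ := by push_cast; ring
  have e2 : ((k:ℝ) + 1) * (δ * (M:ℝ)) = (((M:ℤ) * (k+1) : ℤ):ℝ) * δ := by push_cast; ring
  constructor
  · rintro ⟨g1, g2⟩
    constructor
    · have h0 : (((M:ℤ) * k : ℤ):ℝ) * δ < ((j:ℝ) + 1) * δ := by rw [← e1]; exact g1.trans_lt h2
      have h3 : (((M:ℤ) * k : ℤ):ℝ) < (j:ℝ) + 1 := lt_of_mul_lt_mul_right h0 hδ.le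
      have h5 : (M:ℤ) * k < j + 1 := by exact_mod_cast h3
      omega
    · have h0 : (j:ℝ) * δ < (((M:ℤ) * (k+1) : ℤ):ℝ) * δ := by rw [← e2]; exact h1.trans_lt g2
      have h3 : (j:ℝ) < (((M:ℤ) * (k+1) : ℤ):ℝ) := lt_of_mul_lt_mul_right h0 hδ.le
      exact_mod_cast h3
  · rintro ⟨g1, g2⟩
    constructor
    · rw [e1]
      refine le_trans ?_ h1
      have h0 : (((M:ℤ)*k : ℤ):ℝ) ≤ (j:ℝ) := by exact_mod_cast g1
      exact mul_le_mul_of_nonneg_right h0 hδ.le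
    · rw [e2]
      refine lt_of_lt_of_le h2 ?_
      have h0 : ((j:ℝ) + 1) ≤ (((M:ℤ)*(k+1) : ℤ):ℝ) := by exact_mod_cast g2
      exact mul_le_mul_of_nonneg_right h0 hδ.le

lemma covN_union (hδ : 0 < δ) (𝒯 : Finset (ℤ × ℤ)) :
    covN δ (⋃ w ∈ (𝒯 : Set (ℤ×ℤ)), dySq δ w) = 𝒯.card := by
  have h : {z : ℤ×ℤ | (dySq δ z ∩ ⋃ w ∈ (𝒯 : Set (ℤ×ℤ)), dySq δ w).Nonempty} = ↑𝒯 := by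
    ext z
    constructor
    · rintro ⟨x, hx, hx2⟩
      simp only [mem_iUnion, exists_prop] at hx2
      obtain ⟨w, hw, hxw⟩ := hx2
      rw [show z = w from dySq_unique hδ hx hxw]
      exact hw
    · intro hz
      exact ⟨_, corner_mem_dySq hδ z, mem_biUnion hz (corner_mem_dySq hδ z)⟩
  rw [covN, h, ncard_coe_finset]

lemma covN_union_inter (hδ : 0 < δ) {M : ℕ} (hM : 0 < M) (𝒯 : Finset (ℤ×ℤ)) (z : ℤ×ℤ) :
    covN δ ((⋃ w ∈ (𝒯 : Set (ℤ×ℤ)), dySq δ w) ∩ dySq (δ*M) z) =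
      (𝒯.filter (fun w => (M:ℤ)*z.1 ≤ w.1 ∧ w.1 < (M:ℤ)*(z.1+1) ∧
        (M:ℤ)*z.2 ≤ w.2 ∧ w.2 < (M:ℤ)*(z.2+1))).card := by
  have h : {w : ℤ×ℤ | (dySq δ w ∩ ((⋃ u ∈ (𝒯 : Set (ℤ×ℤ)), dySq δ u) ∩ dySq (δ*M) z)).Nonempty}
      = ↑(𝒯.filter (fun w => (M:ℤ)*z.1 ≤ w.1 ∧ w.1 < (M:ℤ)*(z.1+1) ∧
        (M:ℤ)*z.2 ≤ w.2 ∧ w.2 < (M:ℤ)*(z.2+1))) := by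
    ext w
    simp only [Finset.coe_filter, mem_setOf_eq]
    constructor
    · rintro ⟨x, hxw, hxP, hxz⟩
      simp only [mem_iUnion, exists_prop] at hxP
      obtain ⟨u, hu, hxu⟩ := hxP
      have hwu : w = u := dySq_unique hδ hxw hxu
      subst hwu
      obtain ⟨c1, c2⟩ := (dyIv_scale hδ hM (dySq_mem.mp hxw).1).mp (dySq_mem.mp hxz).1
      obtain ⟨c3, c4⟩ := (dyIv_scale hδ hM (dySq_mem.mp hxw).2).mp (dySq_mem.mp hxz).2
      exact ⟨hu, c1, c2, c3, c4⟩
    · rintro ⟨hw, c1, c2, c3, c4⟩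
      refine ⟨((w.1:ℝ)*δ, (w.2:ℝ)*δ), corner_mem_dySq hδ w,
        mem_biUnion hw (corner_mem_dySq hδ w), ?_⟩
      exact ⟨(dyIv_scale hδ hM (left_mem_dyIv hδ w.1)).mpr ⟨c1, c2⟩,
        (dyIv_scale hδ hM (left_mem_dyIv hδ w.2)).mpr ⟨c3, c4⟩⟩
  rw [covN, h, ncard_coe_finset]

lemma covN1_image (hδ : 0 < δ) (𝒯 : Finset (ℤ×ℤ)) :
    covN1 δ ((fun T : ℤ×ℤ => (T.1:ℝ)*δ) '' ↑𝒯) = (𝒯.image Prod.fst).card := by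
  have h : {k : ℤ | (dyIv δ k ∩ ((fun T : ℤ×ℤ => (T.1:ℝ)*δ) '' ↑𝒯)).Nonempty}
      = ↑(𝒯.image Prod.fst) := by
    ext k
    simp only [mem_setOf_eq, Finset.coe_image, Finset.mem_coe]
    constructor
    · rintro ⟨x, hxk, T, hT, rfl⟩
      rw [show k = T.1 from dyIv_unique hδ hxk (left_mem_dyIv hδ T.1)]
      exact mem_image_of_mem _ hT
    · rintro ⟨T, hT, rfl⟩
      exact ⟨(T.1:ℝ)*δ, left_mem_dyIv hδ T.1, ⟨T, hT, rfl⟩⟩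
  rw [covN1, h, ncard_coe_finset]

lemma covN1_image_inter (hδ : 0 < δ) {M : ℕ} (hM : 0 < M) (𝒯 : Finset (ℤ×ℤ)) (k : ℤ) :
    covN1 δ (((fun T : ℤ×ℤ => (T.1:ℝ)*δ) '' ↑𝒯) ∩ dyIv (δ*M) k)
      = ((𝒯.image Prod.fst).filter (fun j => (M:ℤ)*k ≤ j ∧ j < (M:ℤ)*(k+1))).card := by
  have h : {j : ℤ | (dyIv δ j ∩ (((fun T : ℤ×ℤ => (T.1:ℝ)*δ) '' ↑𝒯) ∩ dyIv (δ*M) k)).Nonempty}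
      = ↑((𝒯.image Prod.fst).filter (fun j => (M:ℤ)*k ≤ j ∧ j < (M:ℤ)*(k+1))) := by
    ext j
    simp only [mem_setOf_eq, Finset.coe_filter, Finset.mem_image]
    constructor
    · rintro ⟨x, hxj, ⟨T, hT, rfl⟩, hxk⟩
      have hjT : j = T.1 := dyIv_unique hδ hxj (left_mem_dyIv hδ T.1)
      subst hjT
      exact ⟨⟨T, hT, rfl⟩, (dyIv_scale hδ hM (left_mem_dyIv hδ T.1)).mp hxk⟩
    · rintro ⟨⟨T, hT, rfl⟩, c1, c2⟩
      exact ⟨(T.1:ℝ)*δ, left_mem_dyIv hδ T.1, ⟨T, hT, rfl⟩,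
        (dyIv_scale hδ hM (left_mem_dyIv hδ T.1)).mpr ⟨c1, c2⟩⟩
  rw [covN1, h, ncard_coe_finset]

lemma fiber_card (s : Finset (ℤ×ℤ)) (h : ∀ T ∈ s, ∀ T' ∈ s, T.1 = T'.1 → |T.2 - T'.2| ≤ 4) :
    s.card ≤ 9 * (s.image Prod.fst).card := by
  apply Finset.card_le_mul_card_image
  intro b hb
  simp only [Finset.mem_image] at hb
  obtain ⟨a, ha, rfl⟩ := hb
  have hsub : (s.filter fun x => x.1 = a.1) ⊆
      (Finset.Icc (a.2 - 4) (a.2 + 4)).image (fun m => (a.1, m)) := by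
    intro T hT
    simp only [Finset.mem_filter] at hT
    obtain ⟨hTs, hT1⟩ := hT
    have habs := h T hTs a ha hT1
    rw [abs_le] at habs
    simp only [Finset.mem_image, Finset.mem_Icc]
    refine ⟨T.2, by omega, ?_⟩
    rw [← hT1]
  calc (s.filter fun x => x.1 = a.1).card
      ≤ ((Finset.Icc (a.2 - 4) (a.2 + 4)).image (fun m => (a.1, m))).card :=
        Finset.card_le_card hsub
    _ ≤ (Finset.Icc (a.2 - 4) (a.2 + 4)).card := Finset.card_image_le
    _ = 9 := by rw [Int.card_Icc]; omega

lemma tube_meet {T p₀ : ℤ×ℤ} (h : (dyTube δ T ∩ dySq δ p₀).Nonempty) :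
    ∃ a b x y : ℝ, a ∈ dyIv δ T.1 ∧ b ∈ dyIv δ T.2 ∧ x ∈ dyIv δ p₀.1 ∧ y ∈ dyIv δ p₀.2 ∧
      y = a * x + b := by
  obtain ⟨q, hq1, hq2⟩ := h
  simp only [dyTube, mem_iUnion, exists_prop] at hq1
  obtain ⟨w, hw, hline⟩ := hq1
  exact ⟨w.1, w.2, q.1, q.2, hw.1, hw.2, hq2.1, hq2.2, hline⟩

lemma iv_subset_unit {n : ℕ} (hδ : δ = (1/2:ℝ)^n) {k : ℤ} {x : ℝ}
    (hx : x ∈ dyIv δ k) (hx01 : x ∈ Ico (0:ℝ) 1) :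
    0 ≤ (k:ℝ)*δ ∧ ((k:ℝ)+1)*δ ≤ 1 := by
  have hδ0 : 0 < δ := hδ ▸ pow_pos (by norm_num) n
  have h2n : (2:ℝ)^n * δ = 1 := by
    rw [hδ, div_pow, one_pow]
    field_simp
  obtain ⟨h1, h2⟩ := hx
  obtain ⟨h3, h4⟩ := hx01
  constructor
  · have hk1 : (0:ℝ) < (k:ℝ) + 1 := by
      by_contra hc
      push_neg at hc
      nlinarith
    have hm1 : (-1:ℝ) < (k:ℝ) := by linarith
    have hk : (-1:ℤ) < k := by exact_mod_cast hm1
    have hk0 : (0:ℝ) ≤ (k:ℝ) := by exact_mod_cast (by omega : (0:ℤ) ≤ k)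
    positivity
  · have h5 : (k:ℝ)*δ < (2:ℝ)^n * δ := by rw [h2n]; exact lt_of_le_of_lt h1 h4
    have h6 : (k:ℝ) < (2:ℝ)^n := lt_of_mul_lt_mul_right h5 hδ0.le
    have h7 : k < (2^n : ℤ) := by exact_mod_cast h6
    have h8 : ((k:ℝ)+1) ≤ (2:ℝ)^n := by exact_mod_cast (by omega : k + 1 ≤ (2^n : ℤ))
    calc ((k:ℝ)+1)*δ ≤ (2:ℝ)^n * δ := mul_le_mul_of_nonneg_right h8 hδ0.le
      _ = 1 := h2n

lemma sq_subset_unit {n : ℕ} (hδ : δ = (1/2:ℝ)^n) {p₀ : ℤ×ℤ} (hp : p₀ ∈ sqIdx δ) :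
    dySq δ p₀ ⊆ unitSq := by
  obtain ⟨q, hq1, hq2⟩ := hp
  obtain ⟨a1, b1⟩ := iv_subset_unit hδ hq1.1 hq2.1
  obtain ⟨a2, b2⟩ := iv_subset_unit hδ hq1.2 hq2.2
  rintro u ⟨⟨u1, u2⟩, ⟨u3, u4⟩⟩
  exact ⟨⟨le_trans a1 u1, lt_of_lt_of_le u2 b1⟩, ⟨le_trans a2 u3, lt_of_lt_of_le u4 b2⟩⟩

/-- Key geometric estimate: two tubes through `p₀` with slope intervals inside `[α, α+L)`
have nearby intercepts. -/
lemma geom (hδ : 0 < δ) {p₀ T T' : ℤ×ℤ} (hp : dySq δ p₀ ⊆ unitSq)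
    (hT : (dyTube δ T ∩ dySq δ p₀).Nonempty) (hT' : (dyTube δ T' ∩ dySq δ p₀).Nonempty)
    (hTi : T ∈ tubeIdx δ) {α L : ℝ}
    (h1 : α ≤ (T.1:ℝ)*δ) (h2 : ((T.1:ℝ)+1)*δ ≤ α + L)
    (h1' : α ≤ (T'.1:ℝ)*δ) (h2' : ((T'.1:ℝ)+1)*δ ≤ α + L) :
    |(T.2:ℝ)*δ - (T'.2:ℝ)*δ| < 4*δ + L := by
  obtain ⟨a, b, x, y, ⟨ha1, ha2⟩, ⟨hb1, hb2⟩, hx, hy, heq⟩ := tube_meet hT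
  obtain ⟨a', b', x', y', ⟨ha1', ha2'⟩, ⟨hb1', hb2'⟩, hx', hy', heq'⟩ := tube_meet hT'
  have hxU : x ∈ Ico (0:ℝ) 1 := by
    have hm : ((x, y) : ℝ×ℝ) ∈ dySq δ p₀ := ⟨hx, hy⟩
    exact (hp hm).1
  have hxU' : x' ∈ Ico (0:ℝ) 1 := by
    have hm : ((x', y') : ℝ×ℝ) ∈ dySq δ p₀ := ⟨hx', hy'⟩
    exact (hp hm).1
  obtain ⟨hx1, hx2⟩ := hx
  obtain ⟨hx1', hx2'⟩ := hx'
  obtain ⟨hy1, hy2⟩ := hy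
  obtain ⟨hy1', hy2'⟩ := hy'
  have haabs : |a| ≤ 1 := by
    rw [abs_le]
    exact ⟨le_trans hTi.1 ha1, le_of_lt (lt_of_lt_of_le ha2 hTi.2)⟩
  have ex : ((p₀.1:ℝ)+1)*δ = (p₀.1:ℝ)*δ + δ := by ring
  have ey : ((p₀.2:ℝ)+1)*δ = (p₀.2:ℝ)*δ + δ := by ring
  have eb : ((T.2:ℝ)+1)*δ = (T.2:ℝ)*δ + δ := by ring
  have eb' : ((T'.2:ℝ)+1)*δ = (T'.2:ℝ)*δ + δ := by ring
  have hxx : |x - x'| ≤ δ := by rw [abs_le]; constructor <;> linarith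
  have haa : |a - a'| ≤ L := by rw [abs_le]; constructor <;> linarith
  have hxabs' : |x'| ≤ 1 := by rw [abs_le]; constructor <;> linarith [hxU'.1, hxU'.2]
  have p1 : |a * (x - x')| ≤ δ := by
    rw [abs_mul]
    calc |a| * |x - x'| ≤ 1 * δ := mul_le_mul haabs hxx (abs_nonneg _) zero_le_one
      _ = δ := one_mul δ
  have p2 : |(a - a') * x'| ≤ L := by
    rw [abs_mul]
    calc |a - a'| * |x'| ≤ L * 1 :=
        mul_le_mul haa hxabs' (abs_nonneg _) (le_trans (abs_nonneg _) haa)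
      _ = L := mul_one L
  have e1 : b = y - a*x := by linarith
  have e1' : b' = y' - a'*x' := by linarith
  have hbb : b - b' = (y - y') - (a*(x-x') + (a-a')*x') := by rw [e1, e1']; ring
  rw [abs_le] at p1 p2
  rw [abs_lt]
  constructor <;> linarith [p1.1, p1.2, p2.1, p2.2]

lemma int_gap (hδ : 0 < δ) {m m' B : ℤ} (h : |(m:ℝ)*δ - (m':ℝ)*δ| < (B:ℝ)*δ) :
    |m - m'| ≤ B - 1 := by
  rw [← sub_mul, abs_mul, abs_of_pos hδ] at h
  have h2 : |(m:ℝ) - (m':ℝ)| < (B:ℝ) := lt_of_mul_lt_mul_right h hδ.le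
  have h3 : |m - m'| < B := by exact_mod_cast h2
  omega

lemma scale_exists {n m : ℕ} (hδ : δ = (1/2:ℝ)^n) (hr : r = (1/2:ℝ)^m) (h : δ ≤ r) :
    ∃ M : ℕ, 0 < M ∧ r = δ * M := by
  have hmn : m ≤ n := by
    by_contra hc
    push_neg at hc
    have hlt := pow_lt_pow_right_of_lt_one₀ (by norm_num : (0:ℝ) < 1/2) (by norm_num) hc
    rw [← hδ, ← hr] at hlt
    linarith
  obtain ⟨kk, hk⟩ : ∃ kk, n = m + kk := ⟨n - m, by omega⟩
  subst hk
  refine ⟨2^kk, pow_pos (by norm_num) kk, ?_⟩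
  rw [hδ, hr]
  push_cast
  rw [pow_add, mul_assoc, ← mul_pow]
  norm_num

lemma mem_Icc_of_mul (hδ : 0 < δ) {m : ℤ} (h1 : -2 ≤ (m:ℝ)*δ) (h2 : (m:ℝ)*δ ≤ 2) :
    m ∈ Set.Icc (⌈-(2/δ)⌉) (⌊2/δ⌋) := by
  constructor
  · have h3 : (-2:ℝ)/δ ≤ (m:ℝ) := (div_le_iff₀ hδ).mpr h1
    have h4 : -(2/δ) = (-2:ℝ)/δ := by ring
    exact Int.ceil_le.mpr (h4 ▸ h3)
  · exact Int.le_floor.mpr ((le_div_iff₀ hδ).mpr h2)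

lemma ts_finite (hδ : 0 < δ) (hδ1 : δ ≤ 1) {p₀ : ℤ×ℤ} (hp : dySq δ p₀ ⊆ unitSq)
    {Ts : Set (ℤ×ℤ)} (hsub : Ts ⊆ tubeIdx δ)
    (hmeet : ∀ T ∈ Ts, (dyTube δ T ∩ dySq δ p₀).Nonempty) : Ts.Finite := by
  apply Set.Finite.subset ((Set.finite_Icc (⌈-(2/δ)⌉) (⌊2/δ⌋)).prod
    (Set.finite_Icc (⌈-(2/δ)⌉) (⌊2/δ⌋)))
  intro T hT
  obtain ⟨ht1, ht2⟩ := hsub hT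
  obtain ⟨a, b, x, y, ⟨ha1, ha2⟩, ⟨hb1, hb2⟩, hx, hy, heq⟩ := tube_meet (hmeet T hT)
  have hxy : ((x, y) : ℝ×ℝ) ∈ unitSq := hp ⟨hx, hy⟩
  have hx0 : (0:ℝ) ≤ x := hxy.1.1
  have hx1 : x < 1 := hxy.1.2
  have hy0 : (0:ℝ) ≤ y := hxy.2.1
  have hy1 : y < 1 := hxy.2.2
  have haabs : |a| ≤ 1 := abs_le.mpr ⟨le_trans ht1 ha1, le_of_lt (lt_of_lt_of_le ha2 ht2)⟩
  have hxabs : |x| ≤ 1 := abs_le.mpr ⟨by linarith, by linarith⟩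
  have hax : |a*x| ≤ 1 := by
    rw [abs_mul]
    calc |a| * |x| ≤ 1 * 1 := mul_le_mul haabs hxabs (abs_nonneg _) zero_le_one
      _ = 1 := one_mul 1
  rw [abs_le] at hax
  have eb : ((T.2:ℝ)+1)*δ = (T.2:ℝ)*δ + δ := by ring
  have e1 : ((T.1:ℝ)+1)*δ = (T.1:ℝ)*δ + δ := by ring
  refine ⟨?_, ?_⟩
  · exact mem_Icc_of_mul hδ (by linarith) (by linarith)
  · exact mem_Icc_of_mul hδ (by linarith [hax.1, hax.2]) (by linarith [hax.1, hax.2])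

end TS

/-- **Corollary 2.13.**  For a family `Ts ⊆ 𝒯^δ` of tubes all meeting a fixed square
`p₀ ∈ 𝒟_δ([0,1)²)`: if the slope set `σ(Ts)` is a `(δ,s,C)`-set then `Ts` is a
`(δ,s,10C)`-set; conversely, if `Ts` is a `(δ,s,C)`-set then `σ(Ts)` is a
`(δ,s,A·C)`-set for an absolute constant `A ≥ 1`. -/
theorem tubes_and_slopes :
    ∃ A : ℝ, 1 ≤ A ∧
      ∀ δ : ℝ, IsDyadicScale δ →
        ∀ p₀ ∈ sqIdx δ, ∀ Ts : Set (ℤ × ℤ), Ts ⊆ tubeIdx δ →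
          (∀ T ∈ Ts, (dyTube δ T ∩ dySq δ p₀).Nonempty) →
          ∀ s C : ℝ, 0 ≤ s → 0 < C →
            (IsDeltaSet1 δ s C ((fun T : ℤ × ℤ => (T.1 : ℝ) * δ) '' Ts) →
              IsDeltaFam δ s (10 * C) Ts) ∧
            (IsDeltaFam δ s C Ts →
              IsDeltaSet1 δ s (A * C) ((fun T : ℤ × ℤ => (T.1 : ℝ) * δ) '' Ts)) := by
  classical
  refine ⟨81, by norm_num, ?_⟩
  intro δ hδdy p₀ hp₀ Ts hTs hmeet s C hs hC
  obtain ⟨n, hδn⟩ := hδdy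
  have hδ0 : 0 < δ := hδn ▸ pow_pos (by norm_num) n
  have hδ1 : δ ≤ 1 := hδn ▸ pow_le_one₀ (by norm_num) (by norm_num)
  have hpu : dySq δ p₀ ⊆ unitSq := TS.sq_subset_unit hδn hp₀
  have hfin : Ts.Finite := TS.ts_finite hδ0 hδ1 hpu hTs hmeet
  set 𝒯 : Finset (ℤ×ℤ) := hfin.toFinset with h𝒯def
  have hcoe : (𝒯 : Set (ℤ×ℤ)) = Ts := hfin.coe_toFinset
  have hmem : ∀ {T : ℤ×ℤ}, T ∈ 𝒯 ↔ T ∈ Ts := fun {T} => hfin.mem_toFinset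
  have h4 : ∀ T ∈ 𝒯, ∀ T' ∈ 𝒯, T.1 = T'.1 → |T.2 - T'.2| ≤ 4 := by
    intro T hT T' hT' h1
    have hg := TS.geom (α := (T.1:ℝ)*δ) (L := δ) hδ0 hpu (hmeet T (hmem.mp hT))
      (hmeet T' (hmem.mp hT')) (hTs (hmem.mp hT))
      (le_refl _) (le_of_eq (by ring))
      (by rw [h1]) (by rw [h1]; exact le_of_eq (by ring))
    have hg5 : |(T.2:ℝ)*δ - (T'.2:ℝ)*δ| < ((5:ℤ):ℝ)*δ := by push_cast; linarith
    have := TS.int_gap hδ0 hg5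
    omega
  have hfib : 𝒯.card ≤ 9 * (𝒯.image Prod.fst).card := TS.fiber_card 𝒯 h4
  have hPcov : covN δ (⋃ z ∈ Ts, dySq δ z) = 𝒯.card := by
    rw [← hcoe]; exact TS.covN_union hδ0 𝒯
  have hScov : covN1 δ ((fun T : ℤ×ℤ => (T.1:ℝ)*δ) '' Ts) = (𝒯.image Prod.fst).card := by
    rw [← hcoe]; exact TS.covN1_image hδ0 𝒯
  constructor
  · -- slopes (δ,s,C) → tubes (δ,s,10C)
    intro hS
    refine ⟨?_, ?_, ?_⟩
    · rw [Bornology.isBounded_biUnion hfin]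
      intro z _
      exact (Metric.isBounded_Ico _ _).prod (Metric.isBounded_Ico _ _)
    · obtain ⟨x, T, hT, rfl⟩ := hS.2.1
      exact ⟨((T.1:ℝ)*δ, (T.2:ℝ)*δ), mem_biUnion hT (TS.corner_mem_dySq hδ0 T)⟩
    · intro r hrdy hδr hr1 z
      obtain ⟨m, hrm⟩ := hrdy
      obtain ⟨M, hM, hrM⟩ := TS.scale_exists hδn hrm hδr
      have hr0 : 0 < r := lt_of_lt_of_le hδ0 hδr
      have hrs : 0 ≤ r ^ s := Real.rpow_nonneg hr0.le s
      have hPint : covN δ ((⋃ w ∈ Ts, dySq δ w) ∩ dySq r z)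
          = (𝒯.filter (fun w => (M:ℤ)*z.1 ≤ w.1 ∧ w.1 < (M:ℤ)*(z.1+1) ∧
              (M:ℤ)*z.2 ≤ w.2 ∧ w.2 < (M:ℤ)*(z.2+1))).card := by
        rw [← hcoe, hrM]
        exact TS.covN_union_inter hδ0 hM 𝒯 z
      have hSint : covN1 δ (((fun T : ℤ×ℤ => (T.1:ℝ)*δ) '' Ts) ∩ dyIv r z.1)
          = ((𝒯.image Prod.fst).filter (fun j => (M:ℤ)*z.1 ≤ j ∧ j < (M:ℤ)*(z.1+1))).card := by
        rw [← hcoe, hrM]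
        exact TS.covN1_image_inter hδ0 hM 𝒯 z.1
      set F := 𝒯.filter (fun w => (M:ℤ)*z.1 ≤ w.1 ∧ w.1 < (M:ℤ)*(z.1+1) ∧
        (M:ℤ)*z.2 ≤ w.2 ∧ w.2 < (M:ℤ)*(z.2+1)) with hF
      have hF4 : ∀ T ∈ F, ∀ T' ∈ F, T.1 = T'.1 → |T.2 - T'.2| ≤ 4 := fun T hT T' hT' =>
        h4 T (Finset.mem_filter.mp hT).1 T' (Finset.mem_filter.mp hT').1
      set Q1 := (𝒯.image Prod.fst).filter (fun j => (M:ℤ)*z.1 ≤ j ∧ j < (M:ℤ)*(z.1+1)) with hQ1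
      have hFsub : F.image Prod.fst ⊆ Q1 := by
        intro j hj
        simp only [Finset.mem_image] at hj
        obtain ⟨T, hT, rfl⟩ := hj
        rw [Finset.mem_filter] at hT
        rw [hQ1, Finset.mem_filter]
        exact ⟨Finset.mem_image_of_mem _ hT.1, hT.2.1, hT.2.2.1⟩
      have hslope := hS.2.2 r ⟨m, hrm⟩ hδr hr1 z.1
      rw [hSint, hScov] at hslope
      rw [hPint, hPcov]
      have himg : ((𝒯.image Prod.fst).card : ℝ) ≤ (𝒯.card : ℝ) := by
        exact_mod_cast Finset.card_image_le
      have ht0 : (0:ℝ) ≤ C * (𝒯.card : ℝ) * r ^ s := by positivity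
      calc (F.card : ℝ) ≤ 9 * (Q1.card : ℝ) := by
            exact_mod_cast le_trans (TS.fiber_card F hF4)
              (Nat.mul_le_mul_left 9 (Finset.card_le_card hFsub))
        _ ≤ 9 * (C * ((𝒯.image Prod.fst).card : ℝ) * r ^ s) := by linarith
        _ ≤ 9 * (C * (𝒯.card : ℝ) * r ^ s) := by
            have hstep : C * ((𝒯.image Prod.fst).card : ℝ) * r ^ s
                ≤ C * (𝒯.card : ℝ) * r ^ s :=
              mul_le_mul_of_nonneg_right (mul_le_mul_of_nonneg_left himg hC.le) hrs
            linarith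
        _ ≤ 10 * C * (𝒯.card : ℝ) * r ^ s := by linarith
  · -- tubes (δ,s,C) → slopes (δ,s,81C)
    intro hFam
    refine ⟨?_, ?_, ?_⟩
    · apply (Metric.isBounded_Icc (-1:ℝ) 1).subset
      rintro x ⟨T, hT, rfl⟩
      obtain ⟨ht1, ht2⟩ := hTs hT
      have e1 : ((T.1:ℝ)+1)*δ = (T.1:ℝ)*δ + δ := by ring
      refine ⟨ht1, ?_⟩
      show (T.1:ℝ) * δ ≤ 1
      linarith
    · obtain ⟨q, hq⟩ := hFam.2.1
      simp only [mem_iUnion, exists_prop] at hq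
      obtain ⟨T, hT, _⟩ := hq
      exact ⟨(T.1:ℝ)*δ, T, hT, rfl⟩
    · intro r hrdy hδr hr1 k
      obtain ⟨m, hrm⟩ := hrdy
      obtain ⟨M, hM, hrM⟩ := TS.scale_exists hδn hrm hδr
      have hr0 : 0 < r := lt_of_lt_of_le hδ0 hδr
      have hrs : 0 ≤ r ^ s := Real.rpow_nonneg hr0.le s
      have hMZ : (0:ℤ) < (M:ℤ) := by exact_mod_cast hM
      have hSint : covN1 δ (((fun T : ℤ×ℤ => (T.1:ℝ)*δ) '' Ts) ∩ dyIv r k)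
          = ((𝒯.image Prod.fst).filter (fun j => (M:ℤ)*k ≤ j ∧ j < (M:ℤ)*(k+1))).card := by
        rw [← hcoe, hrM]
        exact TS.covN1_image_inter hδ0 hM 𝒯 k
      set J := (𝒯.image Prod.fst).filter (fun j => (M:ℤ)*k ≤ j ∧ j < (M:ℤ)*(k+1)) with hJ
      set S' := 𝒯.filter (fun T => (M:ℤ)*k ≤ T.1 ∧ T.1 < (M:ℤ)*(k+1)) with hS'
      have hJsub : J ⊆ S'.image Prod.fst := by
        intro j hj
        rw [hJ, Finset.mem_filter, Finset.mem_image] at hj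
        obtain ⟨⟨T, hT, rfl⟩, hj2⟩ := hj
        exact Finset.mem_image_of_mem _ (Finset.mem_filter.mpr ⟨hT, hj2⟩)
      have hdiv : ∀ a : ℤ, (M:ℤ) * (a / M) ≤ a ∧ a < (M:ℤ) * (a / M + 1) := by
        intro a
        have hd1 := Int.mul_ediv_add_emod a (M:ℤ)
        have hd2 := Int.emod_nonneg a (ne_of_gt hMZ)
        have hd3 := Int.emod_lt_of_pos a hMZ
        constructor <;> linarith
      rcases S'.eq_empty_or_nonempty with hE | hNE
      · rw [hSint]
        have hJ0 : J.card = 0 := Nat.le_zero.mp (le_trans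
          (le_trans (Finset.card_le_card hJsub) Finset.card_image_le) (by rw [hE]; simp))
        rw [hJ0]
        push_cast
        positivity
      · obtain ⟨T₀, hT₀⟩ := hNE
        have hT₀mem := Finset.mem_filter.mp hT₀
        set c := T₀.2 / (M:ℤ) with hc
        -- geometry: every tube of S' has intercept block near c
        have hgap : ∀ T ∈ S', |T.2 - T₀.2| ≤ (M:ℤ) + 3 := by
          intro T hT
          have hTm := Finset.mem_filter.mp hT
          have hc1 : ((((M:ℤ)*k : ℤ)):ℝ)*δ ≤ (T.1:ℝ)*δ :=
            mul_le_mul_of_nonneg_right (by exact_mod_cast hTm.2.1) hδ0.le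
          have hc2 : ((T.1:ℝ)+1)*δ ≤ ((((M:ℤ)*k : ℤ)):ℝ)*δ + (M:ℝ)*δ := by
            have hz : (T.1:ℝ) + 1 ≤ (((M:ℤ)*k : ℤ):ℝ) + (M:ℝ) := by
              have hzz : T.1 + 1 ≤ (M:ℤ)*k + (M:ℤ) := by
                have := hTm.2.2
                linarith [hTm.2.2]
              exact_mod_cast hzz
            calc ((T.1:ℝ)+1)*δ ≤ ((((M:ℤ)*k : ℤ):ℝ) + (M:ℝ))*δ :=
                mul_le_mul_of_nonneg_right hz hδ0.le
              _ = ((((M:ℤ)*k : ℤ)):ℝ)*δ + (M:ℝ)*δ := by ring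
          have hc1' : ((((M:ℤ)*k : ℤ)):ℝ)*δ ≤ (T₀.1:ℝ)*δ :=
            mul_le_mul_of_nonneg_right (by exact_mod_cast hT₀mem.2.1) hδ0.le
          have hc2' : ((T₀.1:ℝ)+1)*δ ≤ ((((M:ℤ)*k : ℤ)):ℝ)*δ + (M:ℝ)*δ := by
            have hz : (T₀.1:ℝ) + 1 ≤ (((M:ℤ)*k : ℤ):ℝ) + (M:ℝ) := by
              have hzz : T₀.1 + 1 ≤ (M:ℤ)*k + (M:ℤ) := by
                linarith [hT₀mem.2.2]
              exact_mod_cast hzz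
            calc ((T₀.1:ℝ)+1)*δ ≤ ((((M:ℤ)*k : ℤ):ℝ) + (M:ℝ))*δ :=
                mul_le_mul_of_nonneg_right hz hδ0.le
              _ = ((((M:ℤ)*k : ℤ)):ℝ)*δ + (M:ℝ)*δ := by ring
          have hg := TS.geom (α := ((((M:ℤ)*k : ℤ)):ℝ)*δ) (L := (M:ℝ)*δ) hδ0 hpu
            (hmeet T (hmem.mp hTm.1)) (hmeet T₀ (hmem.mp hT₀mem.1))
            (hTs (hmem.mp hTm.1)) hc1 hc2 hc1' hc2'
          have hg5 : |(T.2:ℝ)*δ - (T₀.2:ℝ)*δ| < (((M:ℤ)+4 : ℤ):ℝ)*δ := by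
            push_cast
            push_cast at hg
            linarith
          have := TS.int_gap hδ0 hg5
          omega
        have hcover : S' ⊆ (Finset.Icc (c-4) (c+4)).biUnion
            (fun e => 𝒯.filter (fun w => (M:ℤ)*k ≤ w.1 ∧ w.1 < (M:ℤ)*(k+1) ∧
              (M:ℤ)*e ≤ w.2 ∧ w.2 < (M:ℤ)*(e+1))) := by
          intro T hT
          have hTm := Finset.mem_filter.mp hT
          have hgT := hgap T hT
          rw [abs_le] at hgT
          obtain ⟨hdT1, hdT2⟩ := hdiv T.2
          obtain ⟨hdc1, hdc2⟩ := hdiv T₀.2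
          have hMe : (M:ℤ) * (T.2 / M) ≤ (M:ℤ) * (c + 4) := by
            have : (M:ℤ) * (T.2 / M) ≤ (M:ℤ)*c + 4*(M:ℤ) := by linarith
            linarith [this]
          have hMe' : (M:ℤ) * (c - 4) ≤ (M:ℤ) * (T.2 / M) := by
            have : (M:ℤ)*c - 4*(M:ℤ) ≤ (M:ℤ) * (T.2 / M) := by linarith
            linarith [this]
          have he1 : T.2 / (M:ℤ) ≤ c + 4 := le_of_mul_le_mul_left hMe hMZ
          have he2 : c - 4 ≤ T.2 / (M:ℤ) := le_of_mul_le_mul_left hMe' hMZ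
          rw [Finset.mem_biUnion]
          exact ⟨T.2 / (M:ℤ), Finset.mem_Icc.mpr ⟨he2, he1⟩,
            Finset.mem_filter.mpr ⟨hTm.1, hTm.2.1, hTm.2.2, hdT1, hdT2⟩⟩
        have hboxbound : ∀ e ∈ Finset.Icc (c-4) (c+4),
            ((𝒯.filter (fun w => (M:ℤ)*k ≤ w.1 ∧ w.1 < (M:ℤ)*(k+1) ∧
              (M:ℤ)*e ≤ w.2 ∧ w.2 < (M:ℤ)*(e+1))).card : ℝ)
              ≤ C * (𝒯.card : ℝ) * r ^ s := by
          intro e _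
          have hh := hFam.2.2 r ⟨m, hrm⟩ hδr hr1 (k, e)
          have hPint2 : covN δ ((⋃ w ∈ Ts, dySq δ w) ∩ dySq r ((k, e) : ℤ×ℤ))
              = (𝒯.filter (fun w => (M:ℤ)*k ≤ w.1 ∧ w.1 < (M:ℤ)*(k+1) ∧
                (M:ℤ)*e ≤ w.2 ∧ w.2 < (M:ℤ)*(e+1))).card := by
            rw [← hcoe, hrM]
            simpa using TS.covN_union_inter hδ0 hM 𝒯 (k, e)
          rw [hPint2, hPcov] at hh
          exact hh
        have hcard : (S'.card : ℝ) ≤ 9 * (C * (𝒯.card : ℝ) * r ^ s) := by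
          have hc1 : S'.card ≤ ∑ e ∈ Finset.Icc (c-4) (c+4),
              (𝒯.filter (fun w => (M:ℤ)*k ≤ w.1 ∧ w.1 < (M:ℤ)*(k+1) ∧
                (M:ℤ)*e ≤ w.2 ∧ w.2 < (M:ℤ)*(e+1))).card :=
            le_trans (Finset.card_le_card hcover) (Finset.card_biUnion_le)
          have hc2 : ((∑ e ∈ Finset.Icc (c-4) (c+4),
              (𝒯.filter (fun w => (M:ℤ)*k ≤ w.1 ∧ w.1 < (M:ℤ)*(k+1) ∧
                (M:ℤ)*e ≤ w.2 ∧ w.2 < (M:ℤ)*(e+1))).card : ℕ) : ℝ)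
              ≤ ∑ e ∈ Finset.Icc (c-4) (c+4), (C * (𝒯.card : ℝ) * r ^ s) := by
            push_cast
            exact Finset.sum_le_sum hboxbound
          have hc3 : ∑ _e ∈ Finset.Icc (c-4) (c+4), (C * (𝒯.card : ℝ) * r ^ s)
              = 9 * (C * (𝒯.card : ℝ) * r ^ s) := by
            rw [Finset.sum_const, nsmul_eq_mul]
            have h9 : (Finset.Icc (c-4) (c+4)).card = 9 := by rw [Int.card_Icc]; omega
            rw [h9]
            norm_num
          calc (S'.card : ℝ) ≤ _ := by exact_mod_cast hc1
            _ ≤ _ := hc2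
            _ = _ := hc3
        rw [hSint, hScov]
        have hJS : (J.card : ℝ) ≤ (S'.card : ℝ) := by
          exact_mod_cast le_trans (Finset.card_le_card hJsub) Finset.card_image_le
        have hTm9 : (𝒯.card : ℝ) ≤ 9 * ((𝒯.image Prod.fst).card : ℝ) := by
          exact_mod_cast hfib
        have hCrs : (0:ℝ) ≤ C * r ^ s := by positivity
        have hmulstep : C * (𝒯.card : ℝ) * r ^ s
            ≤ C * (9 * ((𝒯.image Prod.fst).card : ℝ)) * r ^ s :=
          mul_le_mul_of_nonneg_right (mul_le_mul_of_nonneg_left hTm9 hC.le) hrs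
        calc ((J.card : ℕ) : ℝ) ≤ (S'.card : ℝ) := hJS
          _ ≤ 9 * (C * (𝒯.card : ℝ) * r ^ s) := hcard
          _ ≤ 9 * (C * (9 * ((𝒯.image Prod.fst).card : ℝ)) * r ^ s) := by linarith
          _ = 81 * C * ((𝒯.image Prod.fst).card : ℝ) * r ^ s := by ring
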